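/- There exists a constant C > 0 such that for every real c ≥ 1 and all p ∈ ℝ³: (i) |μ^c(p) − μ^∞(p)| ≤ (C/c²)·exp(−(|p|/3)·min{|p|, 4c/3}); (ii) |√(μ^c(p)) − √(μ^∞(p))| ≤ (C/c²)·exp(−(|p|/6)·min{|p|, 4c/3}). -/

import Mathlib

open Real MeasureTheory
open scoped BigOperators

set_option maxHeartbeats 1000000

noncomputable section

/-- Momentum space `ℝ³`. -/
abbrev E3 := EuclideanSpace ℝ (Fin 3)

/-- Relativistic energy `p⁰ = √(c² + |p|²)`. -/
def pZ (c : ℝ) (p : E3) : ℝ := Real.sqrt (c ^ 2 + ‖p‖ ^ 2)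

/-- Modified Bessel function
`K_j(γ) = (2^j j!/(2j)!)·γ^{−j}·∫_γ^∞ e^{−λ}(λ² − γ²)^{j−1/2} dλ`. -/
def Kb (j : ℕ) (γ : ℝ) : ℝ :=
  ((2 : ℝ) ^ j * Nat.factorial j / Nat.factorial (2 * j)) * γ ^ (-(j : ℝ)) *
    ∫ l in Set.Ioi γ, Real.exp (-l) * (l ^ 2 - γ ^ 2) ^ ((j : ℝ) - 1 / 2)

/-- Normalized relativistic Maxwellian `μ^c(p) = exp(−c p⁰)/(4π c K₂(c²))`. -/
def muC (c : ℝ) (p : E3) : ℝ :=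
  Real.exp (-(c * pZ c p)) / (4 * Real.pi * c * Kb 2 (c ^ 2))

/-- Normalized classical Maxwellian `μ^∞(p) = (2π)^{−3/2}·exp(−|p|²/2)`. -/
def muInf (p : E3) : ℝ := (2 * Real.pi) ^ (-(3 : ℝ) / 2) * Real.exp (-‖p‖ ^ 2 / 2)

namespace Stmt8Aux
open Real MeasureTheory Set


lemma pow4_le_exp {u : ℝ} (hu : 0 ≤ u) : u ^ 4 ≤ 24 * Real.exp u := by
  have h := Real.sum_le_exp_of_nonneg hu 5
  simp [Finset.sum_range_succ, Nat.factorial] at h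
  nlinarith [pow_nonneg hu 2, pow_nonneg hu 3, pow_nonneg hu 4]

lemma sq_le_exp {u : ℝ} (hu : 0 ≤ u) : u ^ 2 ≤ 2 * Real.exp u := by
  nlinarith [Real.quadratic_le_exp_of_nonneg hu]

lemma Gamma_32 : Real.Gamma (3/2) = Real.sqrt π / 2 := by
  rw [show (3:ℝ)/2 = 1/2 + 1 by norm_num, Real.Gamma_add_one (by norm_num),
    Real.Gamma_one_half_eq]; ring

lemma Gamma_52 : Real.Gamma (5/2) = 3 * Real.sqrt π / 4 := by
  rw [show (5:ℝ)/2 = 3/2 + 1 by norm_num, Real.Gamma_add_one (by norm_num), Gamma_32]; ring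

lemma B_pos : 0 < (2*π) ^ ((3:ℝ)/2) := by positivity

lemma B_eq : (2*π) ^ ((3:ℝ)/2) = 2 ^ ((3:ℝ)/2) * (π * Real.sqrt π) := by
  rw [Real.mul_rpow (by norm_num) Real.pi_pos.le]
  congr 1
  rw [show (3:ℝ)/2 = 1 + 1/2 by norm_num, Real.rpow_add Real.pi_pos, Real.rpow_one,
    ← Real.sqrt_eq_rpow]


lemma gcont (γ : ℝ) : Continuous
    (fun s : ℝ => Real.exp (-s) * s ^ ((3:ℝ)/2) * (s + 2*γ) ^ ((3:ℝ)/2)) := by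
  refine ((Real.continuous_exp.comp continuous_neg).mul
    (continuous_id.rpow_const fun x => Or.inr (by norm_num))).mul
    ((continuous_id.add continuous_const).rpow_const fun x => Or.inr (by norm_num))

lemma iexp_rpow {a : ℝ} (ha : 0 < a) :
    IntegrableOn (fun x : ℝ => Real.exp (-x) * x ^ a) (Ioi 0) := by
  have := Real.GammaIntegral_convergent (show 0 < a + 1 by linarith)
  simpa using this

lemma int_exp_rpow {a : ℝ} (ha : 0 < a) :
    ∫ x in Ioi (0:ℝ), Real.exp (-x) * x ^ a = Real.Gamma (a + 1) := by
  rw [Real.Gamma_eq_integral (show 0 < a + 1 by linarith)]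
  simp

lemma G_bounds {γ : ℝ} (hγ : 1 ≤ γ) :
    IntegrableOn (fun s : ℝ => Real.exp (-s) * s ^ ((3:ℝ)/2) * (s + 2*γ) ^ ((3:ℝ)/2)) (Ioi 0)
    ∧ (2*γ) ^ ((3:ℝ)/2) * Real.Gamma (5/2)
        ≤ ∫ s in Ioi (0:ℝ), Real.exp (-s) * s ^ ((3:ℝ)/2) * (s + 2*γ) ^ ((3:ℝ)/2)
    ∧ (∫ s in Ioi (0:ℝ), Real.exp (-s) * s ^ ((3:ℝ)/2) * (s + 2*γ) ^ ((3:ℝ)/2))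
        ≤ (2*γ) ^ ((3:ℝ)/2) *
          (Real.Gamma (5/2) + Real.Gamma (7/2) / γ + Real.Gamma (9/2) / (4*γ^2)) := by
  have hγ0 : 0 < γ := by linarith
  set g : ℝ → ℝ := fun s => Real.exp (-s) * s ^ ((3:ℝ)/2) * (s + 2*γ) ^ ((3:ℝ)/2) with hg
  set ub : ℝ → ℝ := fun s => (2*γ) ^ ((3:ℝ)/2) *
      (Real.exp (-s) * s ^ ((3:ℝ)/2) + Real.exp (-s) * s ^ ((5:ℝ)/2) / γ
        + Real.exp (-s) * s ^ ((7:ℝ)/2) / (4*γ^2)) with hub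
  have i32 := iexp_rpow (show (0:ℝ) < 3/2 by norm_num)
  have i52 := iexp_rpow (show (0:ℝ) < 5/2 by norm_num)
  have i72 := iexp_rpow (show (0:ℝ) < 7/2 by norm_num)
  have iub : IntegrableOn ub (Ioi 0) := by
    apply Integrable.const_mul
    exact (i32.add (i52.div_const γ)).add (i72.div_const (4*γ^2))
  -- pointwise upper bound on Ioi 0
  have hle : ∀ s ∈ Ioi (0:ℝ), g s ≤ ub s := by
    intro s hs
    have hs0 : (0:ℝ) < s := hs
    have h2γ : (0:ℝ) < 2*γ := by linarith
    have key : (s + 2*γ) ^ ((3:ℝ)/2)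
        ≤ (2*γ) ^ ((3:ℝ)/2) * (1 + s/γ + s^2/(4*γ^2)) := by
      have e1 : s + 2*γ = (2*γ) * (1 + s/(2*γ)) := by field_simp; ring
      have hx : (0:ℝ) ≤ 1 + s/(2*γ) := by positivity
      rw [e1, Real.mul_rpow h2γ.le hx]
      have h1 : (1 + s/(2*γ)) ^ ((3:ℝ)/2) ≤ (1 + s/(2*γ)) ^ ((2:ℝ)) := by
        apply Real.rpow_le_rpow_of_exponent_le _ (by norm_num)
        have : 0 ≤ s/(2*γ) := by positivity
        linarith
      have h2 : (1 + s/(2*γ)) ^ ((2:ℝ)) = 1 + s/γ + s^2/(4*γ^2) := by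
        rw [Real.rpow_two]
        field_simp
        ring
      gcongr
      exact h1.trans_eq h2
    have hpos : 0 ≤ Real.exp (-s) * s ^ ((3:ℝ)/2) := by positivity
    have e52 : s ^ ((3:ℝ)/2) * s = s ^ ((5:ℝ)/2) := by
      have h := Real.rpow_add hs0 (3/2) 1
      rw [Real.rpow_one] at h
      rw [← h]; norm_num
    have e72 : s ^ ((3:ℝ)/2) * s^2 = s ^ ((7:ℝ)/2) := by
      have h := Real.rpow_add hs0 (3/2) 2
      rw [Real.rpow_two] at h
      rw [← h]; norm_num
    calc g s ≤ Real.exp (-s) * s ^ ((3:ℝ)/2)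
        * ((2*γ) ^ ((3:ℝ)/2) * (1 + s/γ + s^2/(4*γ^2))) := by
          exact mul_le_mul_of_nonneg_left key hpos
      _ = ub s := by
          simp only [hub]
          rw [← e52, ← e72]
          field_simp
  have ig : IntegrableOn g (Ioi 0) := by
    apply Integrable.mono' iub ((gcont γ).aestronglyMeasurable)
    filter_upwards [ae_restrict_mem measurableSet_Ioi] with s hs
    have hs0 : (0:ℝ) < s := hs
    rw [Real.norm_eq_abs, abs_of_nonneg (by
      exact mul_nonneg (mul_nonneg (Real.exp_nonneg _) (Real.rpow_nonneg hs0.le _))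
        (Real.rpow_nonneg (by linarith) _))]
    exact hle s hs
  have hge : ∀ s ∈ Ioi (0:ℝ),
      (2*γ) ^ ((3:ℝ)/2) * (Real.exp (-s) * s ^ ((3:ℝ)/2)) ≤ g s := by
    intro s hs
    have hs0 : (0:ℝ) < s := hs
    have key : (2*γ) ^ ((3:ℝ)/2) ≤ (s + 2*γ) ^ ((3:ℝ)/2) :=
      Real.rpow_le_rpow (by linarith) (by linarith) (by norm_num)
    have hpos : 0 ≤ Real.exp (-s) * s ^ ((3:ℝ)/2) := by
      exact mul_nonneg (Real.exp_nonneg _) (Real.rpow_nonneg hs0.le _)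
    calc (2*γ) ^ ((3:ℝ)/2) * (Real.exp (-s) * s ^ ((3:ℝ)/2))
        ≤ (s + 2*γ) ^ ((3:ℝ)/2) * (Real.exp (-s) * s ^ ((3:ℝ)/2)) :=
          mul_le_mul_of_nonneg_right key hpos
      _ = g s := by simp only [hg]; ring
  have v32 : ∫ x in Ioi (0:ℝ), Real.exp (-x) * x ^ ((3:ℝ)/2) = Real.Gamma (5/2) := by
    rw [int_exp_rpow (by norm_num : (0:ℝ) < 3/2)]; norm_num
  have v52 : ∫ x in Ioi (0:ℝ), Real.exp (-x) * x ^ ((5:ℝ)/2) = Real.Gamma (7/2) := by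
    rw [int_exp_rpow (by norm_num : (0:ℝ) < 5/2)]; norm_num
  have v72 : ∫ x in Ioi (0:ℝ), Real.exp (-x) * x ^ ((7:ℝ)/2) = Real.Gamma (9/2) := by
    rw [int_exp_rpow (by norm_num : (0:ℝ) < 7/2)]; norm_num
  refine ⟨ig, ?_, ?_⟩
  · have h := setIntegral_mono_on (i32.const_mul ((2*γ) ^ ((3:ℝ)/2))) ig
      measurableSet_Ioi hge
    calc (2*γ) ^ ((3:ℝ)/2) * Real.Gamma (5/2)
        = ∫ s in Ioi (0:ℝ), (2*γ) ^ ((3:ℝ)/2) * (Real.exp (-s) * s ^ ((3:ℝ)/2)) := by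
          rw [integral_const_mul, v32]
      _ ≤ _ := h
  · have h := setIntegral_mono_on ig iub measurableSet_Ioi hle
    refine h.trans (le_of_eq ?_)
    simp only [hub]
    have iA : IntegrableOn
        (fun x:ℝ => Real.exp (-x) * x ^ ((3:ℝ)/2) + Real.exp (-x) * x ^ ((5:ℝ)/2) / γ)
        (Ioi 0) := i32.add (i52.div_const γ)
    have iB : IntegrableOn (fun x:ℝ => Real.exp (-x) * x ^ ((5:ℝ)/2) / γ) (Ioi 0) :=
      i52.div_const γ
    have iC : IntegrableOn (fun x:ℝ => Real.exp (-x) * x ^ ((7:ℝ)/2) / (4*γ^2)) (Ioi 0) :=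
      i72.div_const (4*γ^2)
    rw [integral_const_mul, integral_add iA iC, integral_add i32 iB,
      integral_div, integral_div, v32, v52, v72]

lemma shift_Ioi (γ : ℝ) (f : ℝ → ℝ) :
    ∫ l in Set.Ioi γ, f l = ∫ s in Set.Ioi (0:ℝ), f (s + γ) := by
  rw [← (measurePreserving_add_right volume γ).setIntegral_preimage_emb
    (MeasurableEquiv.addRight γ).measurableEmbedding f (Set.Ioi γ)]
  congr 1
  ext x
  simp [MeasurableEquiv.addRight]

lemma J_eq {γ : ℝ} (hγ : 0 < γ) :
    ∫ l in Ioi γ, Real.exp (-l) * (l^2 - γ^2) ^ ((3:ℝ)/2)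
      = Real.exp (-γ) *
        ∫ s in Ioi (0:ℝ), Real.exp (-s) * s ^ ((3:ℝ)/2) * (s + 2*γ) ^ ((3:ℝ)/2) := by
  rw [shift_Ioi γ (fun l => Real.exp (-l) * (l^2 - γ^2) ^ ((3:ℝ)/2)), ← integral_const_mul]
  apply setIntegral_congr_fun measurableSet_Ioi
  intro s hs
  have hs0 : (0:ℝ) < s := hs
  have e1 : (s + γ)^2 - γ^2 = s * (s + 2*γ) := by ring
  have e2 : (s * (s + 2*γ)) ^ ((3:ℝ)/2) = s ^ ((3:ℝ)/2) * (s + 2*γ) ^ ((3:ℝ)/2) :=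
    Real.mul_rpow hs0.le (by linarith)
  show Real.exp (-(s+γ)) * ((s+γ)^2 - γ^2) ^ ((3:ℝ)/2) = _
  rw [e1, e2, show (-(s+γ)) = -γ + -s by ring, Real.exp_add]
  ring

/-- The error constant in the Bessel asymptotics. -/
def Dconst : ℝ := (4*π/3) * 2^((3:ℝ)/2) * (Real.Gamma (7/2) + Real.Gamma (9/2)/4)

lemma Dconst_pos : 0 < Dconst := by
  have h1 := Real.Gamma_pos_of_pos (show (0:ℝ) < 7/2 by norm_num)
  have h2 := Real.Gamma_pos_of_pos (show (0:ℝ) < 9/2 by norm_num)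
  have : (0:ℝ) < 2^((3:ℝ)/2) := by positivity
  have : (0:ℝ) < π := Real.pi_pos
  unfold Dconst
  positivity

lemma A_bounds {c : ℝ} (hc : 1 ≤ c) :
    (2*π)^((3:ℝ)/2) ≤ 4*π*c*(Kb 2 (c^2))*Real.exp (c^2) ∧
    4*π*c*(Kb 2 (c^2))*Real.exp (c^2) ≤ (2*π)^((3:ℝ)/2) + Dconst/c^2 := by
  have hc0 : 0 < c := by linarith
  have hγ : 1 ≤ c^2 := by nlinarith
  have hγ0 : 0 < c^2 := by positivity
  set G := ∫ s in Ioi (0:ℝ), Real.exp (-s) * s ^ ((3:ℝ)/2) * (s + 2*(c^2)) ^ ((3:ℝ)/2) with hG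
  obtain ⟨-, hGlo, hGhi⟩ := G_bounds hγ
  -- identify A with (4π/(3c³)) G
  have hKb : Kb 2 (c^2) = (1/3) * (c^4)⁻¹ * (Real.exp (-(c^2)) * G) := by
    rw [Kb]
    have hexp : ((2:ℕ):ℝ) - 1/2 = (3:ℝ)/2 := by norm_num
    have hint : (∫ l in Set.Ioi (c^2), Real.exp (-l) * (l ^ 2 - (c^2) ^ 2) ^ (((2:ℕ):ℝ) - 1/2))
        = Real.exp (-(c^2)) * G := by
      rw [hexp, hG]
      exact J_eq hγ0
    rw [hint]
    have h1 : ((2:ℝ) ^ (2:ℕ) * (Nat.factorial 2 : ℝ) / (Nat.factorial (2*2) : ℝ)) = 1/3 := by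
      norm_num [Nat.factorial]
    have h2 : (c^2 : ℝ) ^ (-((2:ℕ):ℝ)) = (c^4)⁻¹ := by
      rw [Real.rpow_neg hγ0.le, Real.rpow_natCast]
      congr 1
      ring
    rw [h1, h2]
  have hA : 4*π*c*(Kb 2 (c^2))*Real.exp (c^2) = (4*π/(3*c^3)) * G := by
    rw [hKb, Real.exp_neg]
    have he : Real.exp (c^2) ≠ 0 := (Real.exp_pos _).ne'
    have hc3 : (c:ℝ)^3 ≠ 0 := by positivity
    have hc4 : (c:ℝ)^4 ≠ 0 := by positivity
    field_simp
  have h2c : (2*(c^2)) ^ ((3:ℝ)/2) = 2^((3:ℝ)/2) * c^3 := by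
    rw [Real.mul_rpow (by norm_num) (by positivity)]
    congr 1
    rw [← Real.rpow_natCast c 2, ← Real.rpow_mul hc0.le, ← Real.rpow_natCast c 3]
    norm_num
  have hc3 : (c:ℝ)^3 ≠ 0 := by positivity
  constructor
  · rw [hA]
    calc (2*π)^((3:ℝ)/2)
        = (4*π/(3*c^3)) * ((2*(c^2)) ^ ((3:ℝ)/2) * Real.Gamma (5/2)) := by
          rw [h2c, B_eq, Gamma_52]
          field_simp
      _ ≤ (4*π/(3*c^3)) * G := by
          apply mul_le_mul_of_nonneg_left hGlo (by positivity)
  · rw [hA]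
    have step : G ≤ 2^((3:ℝ)/2)*c^3 *
        (Real.Gamma (5/2) + Real.Gamma (7/2)/c^2 + Real.Gamma (9/2)/(4*(c^2)^2)) := by
      rw [← h2c]; exact hGhi
    have hG7 := Real.Gamma_pos_of_pos (show (0:ℝ) < 7/2 by norm_num)
    have hG9 := Real.Gamma_pos_of_pos (show (0:ℝ) < 9/2 by norm_num)
    calc (4*π/(3*c^3)) * G
        ≤ (4*π/(3*c^3)) * (2^((3:ℝ)/2)*c^3 *
            (Real.Gamma (5/2) + Real.Gamma (7/2)/c^2 + Real.Gamma (9/2)/(4*(c^2)^2))) :=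
          mul_le_mul_of_nonneg_left step (by positivity)
      _ = (4*π/3)*2^((3:ℝ)/2)*Real.Gamma (5/2)
            + (4*π/3)*2^((3:ℝ)/2)*(Real.Gamma (7/2)/c^2 + Real.Gamma (9/2)/(4*(c^2)^2)) := by
          field_simp
          ring
      _ ≤ (2*π)^((3:ℝ)/2) + Dconst/c^2 := by
          apply add_le_add
          · rw [B_eq, Gamma_52]; ring_nf; exact le_refl _
          · have h4 : Real.Gamma (9/2)/(4*(c^2)^2) ≤ Real.Gamma (9/2)/(4*c^2) := by
              apply div_le_div_of_nonneg_left hG9.le (by positivity)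
              nlinarith
            have h5 : Real.Gamma (7/2)/c^2 + Real.Gamma (9/2)/(4*c^2)
                = (Real.Gamma (7/2) + Real.Gamma (9/2)/4)/c^2 := by
              field_simp
            calc (4*π/3)*2^((3:ℝ)/2)*(Real.Gamma (7/2)/c^2 + Real.Gamma (9/2)/(4*(c^2)^2))
                ≤ (4*π/3)*2^((3:ℝ)/2)*(Real.Gamma (7/2)/c^2 + Real.Gamma (9/2)/(4*c^2)) := by
                  apply mul_le_mul_of_nonneg_left _ (by positivity)
                  linarith
              _ = Dconst/c^2 := by
                  rw [h5, Dconst]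
                  ring

lemma phi_facts {c r : ℝ} (hc : 1 ≤ c) (hr : 0 ≤ r) :
    0 ≤ c * (Real.sqrt (c^2 + r^2) - c) ∧
    (r/3) * min r (4*c/3) ≤ c * (Real.sqrt (c^2 + r^2) - c) ∧
    c * (Real.sqrt (c^2 + r^2) - c) ≤ r^2/2 ∧
    r^2/2 - c * (Real.sqrt (c^2 + r^2) - c) ≤ r^4/(8*c^2) ∧
    r^4 ≤ 40310784 *
      Real.exp ((c * (Real.sqrt (c^2 + r^2) - c) - (r/3) * min r (4*c/3))/2) := by
  have hc0 : (0:ℝ) < c := by linarith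
  set z := Real.sqrt (c^2 + r^2) with hzdef
  have hz2 : z^2 = c^2 + r^2 := Real.sq_sqrt (by positivity)
  have hzc : c ≤ z := by
    rw [hzdef, show c^2 + r^2 = c^2 + r^2 from rfl]
    calc c = Real.sqrt (c^2) := by rw [Real.sqrt_sq hc0.le]
      _ ≤ Real.sqrt (c^2 + r^2) := Real.sqrt_le_sqrt (by nlinarith)
  have ht : 0 ≤ z - c := by linarith
  have hr2 : r^2 = (z - c) * (z + c) := by linear_combination -hz2
  have hphi0 : 0 ≤ c * (z - c) := mul_nonneg hc0.le ht
  -- φ ≤ r²/2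
  have hphile : c * (z - c) ≤ r^2/2 := by nlinarith [sq_nonneg (z - c)]
  -- r²/2 − φ ≤ r⁴/(8c²)
  have htle : 2*c*(z - c) ≤ r^2 := by nlinarith [sq_nonneg (z - c)]
  have hquart : r^2/2 - c * (z - c) ≤ r^4/(8*c^2) := by
    have heq : r^2/2 - c * (z - c) = (z - c)^2/2 := by rw [hr2]; ring
    have hsq : (2*c*(z - c))^2 ≤ (r^2)^2 := by
      have := mul_self_le_mul_self (show (0:ℝ) ≤ 2*c*(z - c) by positivity) htle
      nlinarith [this]
    rw [heq, div_le_div_iff₀ (by norm_num) (by positivity)]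
    nlinarith [hsq]
  -- lower bounds on φ, by cases
  have hmain : ((r ≤ 4*c/3) → 3*r^2/8 ≤ c * (z - c)) ∧
      ((4*c/3 ≤ r) → c*r/2 ≤ c * (z - c)) := by
    constructor
    · intro hcase
      have hzub : z ≤ 5*c/3 := by
        rw [hzdef]
        calc Real.sqrt (c^2 + r^2) ≤ Real.sqrt ((5*c/3)^2) :=
            Real.sqrt_le_sqrt (by nlinarith)
          _ = 5*c/3 := Real.sqrt_sq (by positivity)
      nlinarith [mul_nonneg ht (show (0:ℝ) ≤ 8*c/3 - (z + c) by linarith)]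
    · intro hcase
      have hzub : z ≤ 2*r - c := by
        rw [hzdef]
        calc Real.sqrt (c^2 + r^2) ≤ Real.sqrt ((2*r - c)^2) :=
            Real.sqrt_le_sqrt (by nlinarith [mul_nonneg hr (show (0:ℝ) ≤ 3*r - 4*c by linarith)])
          _ = 2*r - c := Real.sqrt_sq (by linarith)
      nlinarith [mul_nonneg ht (show (0:ℝ) ≤ 2*r - (z + c) by linarith)]
  have hpsi : (r/3) * min r (4*c/3) ≤ c * (z - c) := by
    rcases le_total r (4*c/3) with hcase | hcase
    · rw [min_eq_left hcase]
      have := hmain.1 hcase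
      nlinarith
    · rw [min_eq_right hcase]
      have := hmain.2 hcase
      nlinarith
  refine ⟨hphi0, hpsi, hphile, hquart, ?_⟩
  rcases le_total r (4*c/3) with hcase | hcase
  · rw [min_eq_left hcase]
    have h1 := hmain.1 hcase
    have hslack : r^2/48 ≤ (c * (z - c) - (r/3) * r)/2 := by nlinarith
    have h2 : (r^2/48)^2 ≤ 2 * Real.exp (r^2/48) := sq_le_exp (by positivity)
    have h3 : Real.exp (r^2/48) ≤ Real.exp ((c * (z - c) - (r/3) * r)/2) :=
      Real.exp_le_exp.mpr hslack
    calc r^4 = 2304 * (r^2/48)^2 := by ring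
      _ ≤ 2304 * (2 * Real.exp (r^2/48)) := by linarith
      _ = 4608 * Real.exp (r^2/48) := by ring
      _ ≤ 40310784 * Real.exp (r^2/48) := by
          have := Real.exp_pos (r^2/48); nlinarith
      _ ≤ 40310784 * Real.exp ((c * (z - c) - (r/3) * r)/2) := by linarith
  · rw [min_eq_right hcase]
    have h1 := hmain.2 hcase
    have hslack : r/36 ≤ (c * (z - c) - (r/3) * (4*c/3))/2 := by
      nlinarith [mul_nonneg (show (0:ℝ) ≤ c - 1 by linarith) hr]
    have h2 : (r/36)^4 ≤ 24 * Real.exp (r/36) := pow4_le_exp (by positivity)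
    have h3 : Real.exp (r/36) ≤ Real.exp ((c * (z - c) - (r/3) * (4*c/3))/2) :=
      Real.exp_le_exp.mpr hslack
    calc r^4 = 1679616 * (r/36)^4 := by ring
      _ ≤ 1679616 * (24 * Real.exp (r/36)) := by linarith
      _ = 40310784 * Real.exp (r/36) := by ring
      _ ≤ 40310784 * Real.exp ((c * (z - c) - (r/3) * (4*c/3))/2) := by linarith

lemma exp_sub_exp_le {a b : ℝ} (hab : a ≤ b) :
    Real.exp (-a) - Real.exp (-b) ≤ (b - a) * Real.exp (-a) := by
  have h1 : 1 - (b - a) ≤ Real.exp (-(b - a)) := by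
    have := Real.add_one_le_exp (-(b - a))
    linarith
  have h2 : Real.exp (-b) = Real.exp (-a) * Real.exp (-(b - a)) := by
    rw [← Real.exp_add]; congr 1; ring
  have h3 : Real.exp (-a) * (1 - (b - a)) ≤ Real.exp (-a) * Real.exp (-(b - a)) :=
    mul_le_mul_of_nonneg_left h1 (Real.exp_nonneg _)
  nlinarith [Real.exp_pos (-a)]

lemma master {φ s ψ A B m d : ℝ} (hBA : B ≤ A) (hB : 0 < B)
    (hφψ : ψ ≤ φ) (hφs : φ ≤ s)
    (hm : (s - φ) * Real.exp (-φ) ≤ m * Real.exp (-ψ))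
    (hd : A - B ≤ d) :
    |Real.exp (-φ)/A - Real.exp (-s)/B| ≤ (m/B + d/B^2) * Real.exp (-ψ) := by
  have hA0 : 0 < A := lt_of_lt_of_le hB hBA
  have hsplit : Real.exp (-φ)/A - Real.exp (-s)/B
      = (Real.exp (-φ) - Real.exp (-s))/A + Real.exp (-s) * (1/A - 1/B) := by
    field_simp
    ring
  have hT1 : |(Real.exp (-φ) - Real.exp (-s))/A| ≤ m/B * Real.exp (-ψ) := by
    have hnn : 0 ≤ Real.exp (-φ) - Real.exp (-s) := by
      have := Real.exp_le_exp.mpr (neg_le_neg hφs)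
      linarith
    rw [abs_div, abs_of_nonneg hnn, abs_of_pos hA0]
    have h1 : Real.exp (-φ) - Real.exp (-s) ≤ m * Real.exp (-ψ) :=
      (exp_sub_exp_le hφs).trans hm
    have h2 : (Real.exp (-φ) - Real.exp (-s))/A ≤ (Real.exp (-φ) - Real.exp (-s))/B :=
      div_le_div_of_nonneg_left hnn hB hBA
    calc (Real.exp (-φ) - Real.exp (-s))/A ≤ (Real.exp (-φ) - Real.exp (-s))/B := h2
      _ ≤ (m * Real.exp (-ψ))/B := (div_le_div_iff_of_pos_right hB).mpr h1
      _ = m/B * Real.exp (-ψ) := by ring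
  have hT2 : |Real.exp (-s) * (1/A - 1/B)| ≤ d/B^2 * Real.exp (-ψ) := by
    have hinv : 0 ≤ 1/B - 1/A := by
      rw [sub_nonneg]
      exact one_div_le_one_div_of_le hB hBA
    rw [abs_mul, abs_of_nonneg (Real.exp_nonneg _), abs_sub_comm, abs_of_nonneg hinv]
    have hexp : Real.exp (-s) ≤ Real.exp (-ψ) :=
      Real.exp_le_exp.mpr (by linarith)
    have hinv2 : 1/B - 1/A ≤ d/B^2 := by
      have he : 1/B - 1/A = (A - B)/(A*B) := by
        rw [div_sub_div _ _ hB.ne' hA0.ne', one_mul, mul_one, mul_comm]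
      rw [he]
      calc (A - B)/(A*B) ≤ (A - B)/(B*B) := by
            apply div_le_div_of_nonneg_left (by linarith) (by positivity)
            exact mul_le_mul_of_nonneg_right hBA hB.le
        _ ≤ d/(B*B) := by
            apply div_le_div_of_nonneg_right hd (by positivity)
        _ = d/B^2 := by ring_nf
    calc Real.exp (-s) * (1/B - 1/A) ≤ Real.exp (-ψ) * (d/B^2) := by
          apply mul_le_mul hexp hinv2 hinv (Real.exp_nonneg _)
      _ = d/B^2 * Real.exp (-ψ) := by ring
  calc |Real.exp (-φ)/A - Real.exp (-s)/B|
      ≤ |(Real.exp (-φ) - Real.exp (-s))/A| + |Real.exp (-s) * (1/A - 1/B)| := by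
        rw [hsplit]; exact abs_add_le _ _
    _ ≤ m/B * Real.exp (-ψ) + d/B^2 * Real.exp (-ψ) := add_le_add hT1 hT2
    _ = (m/B + d/B^2) * Real.exp (-ψ) := by ring

lemma sqrt_exp' (x : ℝ) : Real.sqrt (Real.exp x) = Real.exp (x/2) := by
  rw [show Real.exp x = (Real.exp (x/2))^2 by rw [sq, ← Real.exp_add, add_halves],
    Real.sqrt_sq (Real.exp_nonneg _)]

end Stmt8Aux

/-- There is `C > 0` such that for every `c ≥ 1` and all `p ∈ ℝ³`:
(i) `|μ^c(p) − μ^∞(p)| ≤ (C/c²)·exp(−(|p|/3)·min{|p|, 4c/3})`;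
(ii) `|√(μ^c(p)) − √(μ^∞(p))| ≤ (C/c²)·exp(−(|p|/6)·min{|p|, 4c/3})`. -/
theorem stmt8 :
    ∃ C : ℝ, 0 < C ∧ ∀ (c : ℝ), 1 ≤ c → ∀ p : E3,
      |muC c p - muInf p| ≤ C / c ^ 2 * Real.exp (-(‖p‖ / 3) * min ‖p‖ (4 * c / 3)) ∧
      |Real.sqrt (muC c p) - Real.sqrt (muInf p)|
        ≤ C / c ^ 2 * Real.exp (-(‖p‖ / 6) * min ‖p‖ (4 * c / 3)) := by
  have hB : 0 < (2*π)^((3:ℝ)/2) := Stmt8Aux.B_pos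
  have hD := Stmt8Aux.Dconst_pos
  set B := (2*π)^((3:ℝ)/2) with hBdef
  have hsB : 0 < Real.sqrt B := Real.sqrt_pos.mpr hB
  set K : ℝ := 40310784 with hKdef
  have hK : (0:ℝ) < K := by norm_num [hKdef]
  set Dc := Stmt8Aux.Dconst with hDcdef
  set C1 : ℝ := K/(8*B) + Dc/B^2 with hC1def
  set C2 : ℝ := K/(16*Real.sqrt B) + Dc/(2*B*Real.sqrt B) with hC2def
  have hC1 : 0 < C1 := by positivity
  have hC2 : 0 < C2 := by positivity
  refine ⟨C1 + C2, by positivity, ?_⟩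
  intro c hc p
  have hc0 : (0:ℝ) < c := by linarith
  have hc2 : (0:ℝ) < c^2 := by positivity
  obtain ⟨h0, hψφ, hφs, hquart, hqe⟩ := Stmt8Aux.phi_facts hc (norm_nonneg p)
  obtain ⟨hAlo, hAhi⟩ := Stmt8Aux.A_bounds hc
  set r := ‖p‖ with hrdef
  have hr : 0 ≤ r := norm_nonneg p
  set z := Real.sqrt (c^2 + r^2) with hzdef
  set φ := c * (z - c) with hφdef
  set ψ := (r/3) * min r (4*c/3) with hψdef
  set A := 4*π*c*(Kb 2 (c^2))*Real.exp (c^2) with hAdef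
  have hA0 : 0 < A := lt_of_lt_of_le hB hAlo
  have hD0 : 0 < 4*π*c*Kb 2 (c^2) := by
    rcases mul_pos_iff.mp (hAdef ▸ hA0) with ⟨h, -⟩ | ⟨-, h2⟩
    · exact h
    · exact absurd h2 (by linarith [Real.exp_pos (c^2)])
  -- identify muC and muInf
  have hmuC : muC c p = Real.exp (-φ) / A := by
    rw [muC, pZ, ← hrdef, ← hzdef, hφdef, hAdef]
    rw [div_eq_div_iff hD0.ne' (mul_pos hD0 (Real.exp_pos _)).ne']
    have hkey : Real.exp (-(c*z)) * Real.exp (c^2) = Real.exp (-(c*(z - c))) := by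
      rw [← Real.exp_add]; congr 1; ring
    linear_combination (4*π*c*Kb 2 (c^2)) * hkey
  have hmuInf : muInf p = Real.exp (-(r^2/2)) / B := by
    rw [muInf, ← hrdef, show (-(3:ℝ)/2) = -((3:ℝ)/2) by norm_num,
      Real.rpow_neg (by positivity : (0:ℝ) ≤ 2*π), ← hBdef, inv_mul_eq_div, neg_div]
  -- the m-bounds
  have hexpprod : ∀ t : ℝ, Real.exp ((φ - ψ)/2) * Real.exp t ≤ Real.exp (((φ - ψ)/2) + t) :=
    fun t => le_of_eq (Real.exp_add _ _).symm
  have hq4 : r^4 * Real.exp (-φ) ≤ K * Real.exp (-ψ) := by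
    have h1 : r^4 * Real.exp (-φ) ≤ K * Real.exp ((φ - ψ)/2) * Real.exp (-φ) :=
      mul_le_mul_of_nonneg_right hqe (Real.exp_nonneg _)
    have h2 : K * Real.exp ((φ - ψ)/2) * Real.exp (-φ) = K * Real.exp ((φ - ψ)/2 + -φ) := by
      rw [Real.exp_add]; ring
    have h3 : Real.exp ((φ - ψ)/2 + -φ) ≤ Real.exp (-ψ) :=
      Real.exp_le_exp.mpr (by linarith)
    calc r^4 * Real.exp (-φ) ≤ K * Real.exp ((φ - ψ)/2 + -φ) := by rw [← h2]; exact h1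
      _ ≤ K * Real.exp (-ψ) := mul_le_mul_of_nonneg_left h3 hK.le
  have hq4' : r^4 * Real.exp (-(φ/2)) ≤ K * Real.exp (-(ψ/2)) := by
    have h1 : r^4 * Real.exp (-(φ/2)) ≤ K * Real.exp ((φ - ψ)/2) * Real.exp (-(φ/2)) :=
      mul_le_mul_of_nonneg_right hqe (Real.exp_nonneg _)
    have h2 : K * Real.exp ((φ - ψ)/2) * Real.exp (-(φ/2)) = K * Real.exp ((φ - ψ)/2 + -(φ/2)) := by
      rw [Real.exp_add]; ring
    have h3 : Real.exp ((φ - ψ)/2 + -(φ/2)) = Real.exp (-(ψ/2)) := by congr 1; ring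
    calc r^4 * Real.exp (-(φ/2)) ≤ K * Real.exp ((φ - ψ)/2 + -(φ/2)) := by rw [← h2]; exact h1
      _ = K * Real.exp (-(ψ/2)) := by rw [h3]
  have hm1 : (r^2/2 - φ) * Real.exp (-φ) ≤ (K/(8*c^2)) * Real.exp (-ψ) := by
    have h1 : (r^2/2 - φ) * Real.exp (-φ) ≤ (r^4/(8*c^2)) * Real.exp (-φ) :=
      mul_le_mul_of_nonneg_right hquart (Real.exp_nonneg _)
    have h2 : (r^4/(8*c^2)) * Real.exp (-φ) = (r^4 * Real.exp (-φ))/(8*c^2) := by ring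
    have h3 : (r^4 * Real.exp (-φ))/(8*c^2) ≤ (K * Real.exp (-ψ))/(8*c^2) :=
      div_le_div_of_nonneg_right hq4 (by positivity)
    calc (r^2/2 - φ) * Real.exp (-φ) ≤ (r^4 * Real.exp (-φ))/(8*c^2) := by rw [← h2]; exact h1
      _ ≤ (K * Real.exp (-ψ))/(8*c^2) := h3
      _ = (K/(8*c^2)) * Real.exp (-ψ) := by ring
  have hd1 : A - B ≤ Dc/c^2 := by linarith
  -- Part (i)
  have part1 := Stmt8Aux.master hAlo hB hψφ hφs hm1 hd1
  -- Part (ii) setup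
  have hsBA : Real.sqrt B ≤ Real.sqrt A := Real.sqrt_le_sqrt hAlo
  have hsA : 0 < Real.sqrt A := lt_of_lt_of_le hsB hsBA
  have hdA : Real.sqrt A - Real.sqrt B ≤ (Dc/c^2)/(2*Real.sqrt B) := by
    have e1 : (Real.sqrt A - Real.sqrt B)*(Real.sqrt A + Real.sqrt B) = A - B := by
      have := Real.sq_sqrt hA0.le
      have := Real.sq_sqrt hB.le
      nlinarith
    have e2 : (Real.sqrt A - Real.sqrt B)*(2*Real.sqrt B)
        ≤ (Real.sqrt A - Real.sqrt B)*(Real.sqrt A + Real.sqrt B) :=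
      mul_le_mul_of_nonneg_left (by linarith) (by linarith)
    rw [le_div_iff₀ (by positivity)]
    calc (Real.sqrt A - Real.sqrt B)*(2*Real.sqrt B) ≤ A - B := by rw [← e1]; exact e2
      _ ≤ Dc/c^2 := hd1
  have hm2 : ((r^2/2)/2 - φ/2) * Real.exp (-(φ/2)) ≤ (K/(16*c^2)) * Real.exp (-(ψ/2)) := by
    have hq2 : (r^2/2)/2 - φ/2 ≤ r^4/(16*c^2) := by
      have he : r^4/(16*c^2) = (r^4/(8*c^2))/2 := by ring
      rw [he]; linarith
    have h1 : ((r^2/2)/2 - φ/2) * Real.exp (-(φ/2)) ≤ (r^4/(16*c^2)) * Real.exp (-(φ/2)) :=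
      mul_le_mul_of_nonneg_right hq2 (Real.exp_nonneg _)
    have h2 : (r^4/(16*c^2)) * Real.exp (-(φ/2)) = (r^4 * Real.exp (-(φ/2)))/(16*c^2) := by ring
    have h3 : (r^4 * Real.exp (-(φ/2)))/(16*c^2) ≤ (K * Real.exp (-(ψ/2)))/(16*c^2) :=
      div_le_div_of_nonneg_right hq4' (by positivity)
    calc ((r^2/2)/2 - φ/2) * Real.exp (-(φ/2)) ≤ (r^4 * Real.exp (-(φ/2)))/(16*c^2) := by
          rw [← h2]; exact h1
      _ ≤ (K * Real.exp (-(ψ/2)))/(16*c^2) := h3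
      _ = (K/(16*c^2)) * Real.exp (-(ψ/2)) := by ring
  have part2 := Stmt8Aux.master hsBA hsB (by linarith : ψ/2 ≤ φ/2)
    (by linarith : φ/2 ≤ (r^2/2)/2) hm2 hdA
  -- sqrt identifications
  have hmuC2 : Real.sqrt (muC c p) = Real.exp (-(φ/2)) / Real.sqrt A := by
    rw [hmuC, Real.sqrt_div (Real.exp_nonneg _), Stmt8Aux.sqrt_exp', neg_div]
  have hmuInf2 : Real.sqrt (muInf p) = Real.exp (-((r^2/2)/2)) / Real.sqrt B := by
    rw [hmuInf, Real.sqrt_div (Real.exp_nonneg _), Stmt8Aux.sqrt_exp', neg_div]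
  constructor
  · rw [hmuC, hmuInf, show -(r/3) * min r (4*c/3) = -ψ by rw [hψdef]; ring]
    refine part1.trans ?_
    have heq : (K/(8*c^2))/B + (Dc/c^2)/B^2 = C1/c^2 := by
      rw [hC1def]; field_simp
    rw [heq]
    apply mul_le_mul_of_nonneg_right _ (Real.exp_nonneg _)
    apply (div_le_div_iff_of_pos_right hc2).mpr
    linarith
  · rw [hmuC2, hmuInf2, show -(r/6) * min r (4*c/3) = -(ψ/2) by rw [hψdef]; ring]
    refine part2.trans ?_
    have heq : (K/(16*c^2))/Real.sqrt B + ((Dc/c^2)/(2*Real.sqrt B))/(Real.sqrt B)^2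
        = C2/c^2 := by
      rw [hC2def, Real.sq_sqrt hB.le]
      field_simp
    rw [heq]
    apply mul_le_mul_of_nonneg_right _ (Real.exp_nonneg _)
    apply (div_le_div_iff_of_pos_right hc2).mpr
    linarith

end
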